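/- Every nonabelian group of order 12 that contains no element of order 6 is isomorphic to the alternating group A₄. -/

import Mathlib

/-- `Equiv.permCongr` as a `MulEquiv`. -/
def permCongrMulEquiv {α β : Type*} (e : α ≃ β) : Equiv.Perm α ≃* Equiv.Perm β :=
  { Equiv.permCongr e with
    map_mul' := fun p q => by
      ext b
      simp [Equiv.permCongr_apply] }

/-- Every nonabelian group of order 12 containing no element of order 6 is isomorphic
to the alternating group `A₄`. -/
theorem nonabelian_order_twelve_no_order_six_iso_A4
    (G : Type*) [Group G] (hcard : Nat.card G = 12)
    (hnonab : ¬ ∀ a b : G, a * b = b * a)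
    (horder : ∀ g : G, orderOf g ≠ 6) :
    Nonempty (G ≃* alternatingGroup (Fin 4)) := by
  have h3 : Fact (Nat.Prime 3) := ⟨by norm_num⟩
  have h2 : Fact (Nat.Prime 2) := ⟨by norm_num⟩
  have hfin : Finite G := Nat.finite_of_card_ne_zero (by omega)
  obtain ⟨P⟩ : Nonempty (Sylow 3 G) := inferInstance
  have hf3 : (Nat.factorization 12) 3 = 1 := by
    rw [show (12:ℕ) = 4 * 3 by norm_num, Nat.factorization_mul (by norm_num) (by norm_num)]
    simp [Nat.factorization_eq_zero_of_not_dvd (by norm_num : ¬ (3:ℕ) ∣ 4),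
      Nat.Prime.factorization_self Nat.prime_three]
  have hf2 : (Nat.factorization 12) 2 = 2 := by
    rw [show (12:ℕ) = 3 * 2^2 by norm_num, Nat.factorization_mul (by norm_num) (by norm_num),
      Nat.Prime.factorization_pow (p := 2)]
    · simp [Nat.factorization_eq_zero_of_not_dvd (by norm_num : ¬ (2:ℕ) ∣ 3)]
    · exact Nat.prime_two
  have hSylcard : ∀ R : Sylow 3 G, Nat.card (R : Subgroup G) = 3 := by
    intro R
    rw [Sylow.card_eq_multiplicity, hcard, hf3, pow_one]
  have hPindex : (P : Subgroup G).index = 4 := by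
    have := Subgroup.card_mul_index (P : Subgroup G)
    rw [hcard, hSylcard P] at this
    omega
  have hdvd : Nat.card (Sylow 3 G) ∣ 4 := hPindex ▸ P.card_dvd_index
  have hmod : Nat.card (Sylow 3 G) % 3 = 1 := by
    have := card_sylow_modEq_one 3 G
    unfold Nat.ModEq at this
    omega
  have hn : Nat.card (Sylow 3 G) = 1 ∨ Nat.card (Sylow 3 G) = 4 := by
    have hle : Nat.card (Sylow 3 G) ≤ 4 := Nat.le_of_dvd (by norm_num) hdvd
    have hpos : 0 < Nat.card (Sylow 3 G) := Nat.card_pos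
    interval_cases h : Nat.card (Sylow 3 G) <;> simp_all <;> omega
  rcases hn with hn | hn
  · -- unique Sylow 3-subgroup: derive a contradiction
    exfalso
    haveI : Subsingleton (Sylow 3 G) := (Nat.card_eq_one_iff_unique.mp hn).1
    have hPnormal : (P : Subgroup G).Normal := by
      rw [← Subgroup.normalizer_eq_top_iff, eq_top_iff]
      intro g _
      exact Sylow.smul_eq_iff_mem_normalizer.mp (Subsingleton.elim _ _)
    obtain ⟨x, hx⟩ : ∃ x : (P : Subgroup G), orderOf x = 3 := by
      apply exists_prime_orderOf_dvd_card' 3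
      rw [hSylcard P]
    have hxG : orderOf (x : G) = 3 := by
      rw [orderOf_submonoid, hx]
    obtain ⟨Q⟩ : Nonempty (Sylow 2 G) := inferInstance
    have hQcard : Nat.card (Q : Subgroup G) = 4 := by
      rw [Sylow.card_eq_multiplicity, hcard, hf2]
      norm_num
    haveI : Fintype (P : Subgroup G) := Fintype.ofFinite _
    haveI : Fintype (Q : Subgroup G) := Fintype.ofFinite _
    have hlt : Fintype.card (P : Subgroup G) < Fintype.card (Q : Subgroup G) := by
      rw [← Nat.card_eq_fintype_card, ← Nat.card_eq_fintype_card, hSylcard P, hQcard]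
      norm_num
    obtain ⟨q₁, q₂, hne, heq⟩ := Fintype.exists_ne_map_eq_of_card_lt
      (fun q : (Q : Subgroup G) =>
        (⟨(q : G) * x * (q : G)⁻¹, hPnormal.conj_mem _ x.2 _⟩ : (P : Subgroup G))) hlt
    set q : G := (q₂ : G)⁻¹ * q₁ with hq
    have hqQ : q ∈ (Q : Subgroup G) := mul_mem (inv_mem q₂.2) q₁.2
    have hq1 : q ≠ 1 := by
      intro h
      apply hne
      apply Subtype.ext
      have : (q₂ : G) * ((q₂ : G)⁻¹ * q₁) = (q₂ : G) * 1 := by rw [← hq, h]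
      rw [mul_one, ← mul_assoc, mul_inv_cancel, one_mul] at this
      exact this
    have heq' : (q₁ : G) * x * (q₁ : G)⁻¹ = (q₂ : G) * x * (q₂ : G)⁻¹ :=
      congrArg Subtype.val heq
    have hcomm : Commute (x : G) q := by
      have key : (q₂ : G)⁻¹ * ((q₁ : G) * x * (q₁ : G)⁻¹) * q₂ = (x : G) := by
        rw [heq']; group
      show (x : G) * q = q * (x : G)
      calc (x : G) * q = ((q₂ : G)⁻¹ * ((q₁ : G) * x * (q₁ : G)⁻¹) * q₂) * q := by rw [key]
        _ = q * x := by rw [hq]; group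
    have hqdvd : orderOf q ∣ 4 := by
      have := Subgroup.orderOf_dvd_natCard (Q : Subgroup G) hqQ
      rwa [hQcard] at this
    have hq2 : orderOf q = 2 ∨ orderOf q = 4 := by
      have h0 : orderOf q ≠ 1 := by simp [orderOf_eq_one_iff, hq1]
      have hle : orderOf q ≤ 4 := Nat.le_of_dvd (by norm_num) hqdvd
      have hpos : 0 < orderOf q := Nat.pos_of_ne_zero (fun h => by simp [h] at hqdvd)
      interval_cases h : orderOf q <;> omega
    rcases hq2 with hq2 | hq2
    · have : orderOf ((x : G) * q) = 6 := by
        rw [hcomm.orderOf_mul_eq_mul_orderOf_of_coprime (by rw [hxG, hq2]; decide),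
          hxG, hq2]
      exact horder _ this
    · have h12 : orderOf ((x : G) * q) = 12 := by
        rw [hcomm.orderOf_mul_eq_mul_orderOf_of_coprime (by rw [hxG, hq2]; decide),
          hxG, hq2]
      have : orderOf (((x : G) * q) ^ 2) = 6 := by
        rw [orderOf_pow, h12]
        norm_num
      exact horder _ this
  · -- four Sylow 3-subgroups: G acts faithfully on them
    have hnormalizer : ∀ R : Sylow 3 G, Subgroup.normalizer (R : Set G) = R := by
      intro R
      have hRidx : (Subgroup.normalizer (R : Set G)).index = 4 := by
        rw [← R.card_eq_index_normalizer, hn]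
      have hRcard : Nat.card (Subgroup.normalizer (R : Set G)) = 3 := by
        have := Subgroup.card_mul_index (Subgroup.normalizer (R : Set G))
        rw [hcard, hRidx] at this
        omega
      symm
      apply Subgroup.eq_of_le_of_card_ge (K := Subgroup.normalizer (R : Set G)) Subgroup.le_normalizer
      rw [hRcard, hSylcard R]
    haveI : Fintype (Sylow 3 G) := Fintype.ofFinite _
    have hcard4 : Fintype.card (Sylow 3 G) = 4 := by
      rw [← Nat.card_eq_fintype_card]; exact hn
    let φ := MulAction.toPermHom G (Sylow 3 G)
    have hker : φ.ker = ⊥ := by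
      rw [eq_bot_iff]
      intro g hg
      have hg1 : φ g = 1 := hg
      have hmem : ∀ R : Sylow 3 G, g ∈ (R : Subgroup G) := by
        intro R
        have hfix : g • R = R := by
          have : φ g R = (1 : Equiv.Perm (Sylow 3 G)) R := by rw [hg1]
          simpa [φ] using this
        have := Sylow.smul_eq_iff_mem_normalizer.mp hfix
        rwa [hnormalizer R] at this
      haveI : Nontrivial (Sylow 3 G) := Fintype.one_lt_card_iff_nontrivial.mp (by omega)
      obtain ⟨R₁, R₂, hRne⟩ := exists_pair_ne (Sylow 3 G)
      simp only [Subgroup.mem_bot]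
      by_contra hg0
      have horder3 : orderOf g = 3 := by
        have hd : orderOf g ∣ 3 := (hSylcard R₁) ▸ Subgroup.orderOf_dvd_natCard _ (hmem R₁)
        have hne1 : orderOf g ≠ 1 := by simp [orderOf_eq_one_iff, hg0]
        rcases (Nat.prime_three.eq_one_or_self_of_dvd _ hd) with h | h
        · exact absurd h hne1
        · exact h
      have hzp : ∀ R : Sylow 3 G, Subgroup.zpowers g = (R : Subgroup G) := by
        intro R
        apply Subgroup.eq_of_le_of_card_ge
          ((Subgroup.zpowers_le).mpr (hmem R))
        rw [hSylcard R, Nat.card_zpowers, horder3]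
      exact hRne (Sylow.ext ((hzp R₁).symm.trans (hzp R₂)))
    have hinj : Function.Injective φ := (MonoidHom.ker_eq_bot_iff φ).mp hker
    let e : Sylow 3 G ≃ Fin 4 := Fintype.equivFinOfCardEq hcard4
    let ψ : G →* Equiv.Perm (Fin 4) := (permCongrMulEquiv e).toMonoidHom.comp φ
    have hψinj : Function.Injective ψ := (permCongrMulEquiv e).injective.comp hinj
    let ι : G ≃* ψ.range := MonoidHom.ofInjective hψinj
    have hrangecard : Nat.card ψ.range = 12 := by
      rw [← Nat.card_congr ι.toEquiv, hcard]
    have h24 : Nat.card (Equiv.Perm (Fin 4)) = 24 := by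
      rw [Nat.card_eq_fintype_card, Fintype.card_perm, Fintype.card_fin]
      norm_num [Nat.factorial]
    have hindex : ψ.range.index = 2 := by
      have := Subgroup.card_mul_index ψ.range
      rw [hrangecard, h24] at this
      omega
    have hA4le : alternatingGroup (Fin 4) ≤ ψ.range := by
      rw [← Equiv.Perm.closure_three_cycles_eq_alternating, Subgroup.closure_le]
      intro σ hσ
      have ho : orderOf σ = 3 := hσ.orderOf
      have h4 : (σ ^ 2) ^ 2 = σ := by
        have h1 : σ ^ 3 = 1 := by rw [← ho]; exact pow_orderOf_eq_one σ
        calc (σ ^ 2) ^ 2 = σ ^ 3 * σ := by group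
          _ = σ := by rw [h1, one_mul]
      have := Subgroup.sq_mem_of_index_two hindex (σ ^ 2)
      rw [h4] at this
      exact this
    have hA4card : Nat.card (alternatingGroup (Fin 4)) = 12 := by
      have h2m := two_mul_card_alternatingGroup (α := Fin 4)
      simp only [← Nat.card_eq_fintype_card] at h2m
      rw [h24] at h2m
      omega
    have hA4 : ψ.range = alternatingGroup (Fin 4) :=
      (Subgroup.eq_of_le_of_card_ge hA4le (by rw [hrangecard, hA4card])).symm
    exact ⟨ι.trans (MulEquiv.subgroupCongr hA4)⟩
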